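/- arXiv:2309.00960 — 3 statements merged into one kernel-verified Lean document; each statement's English description precedes it below -/
import Mathlib

section
/- A symmetric p×p real matrix X with nonpositive off-diagonal entries and X·1 = 0 is the Laplacian of a connected graph (i.e., X is positive semidefinite with rank p-1) if and only if X + J is positive definite, where J = (1/p)·1·1ᵀ. -/
open Matrix BigOperators Finset
noncomputable section
/-- Index set for the `p(p-1)/2` free entries: pairs `(i,j)` with `i > j`. -/
abbrev EdgeIdx (p : ℕ) := {q : Fin p × Fin p // q.2 < q.1}
/-- Symmetric weight matrix built from `x`. -/
def wmat {p : ℕ} (x : EdgeIdx p → ℝ) (i j : Fin p) : ℝ :=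
  if h : j < i then x ⟨(i, j), h⟩ else if h : i < j then x ⟨(j, i), h⟩ else 0
/-- The Laplacian operator `L : ℝ^{p(p-1)/2} → ℝ^{p×p}`. -/
def Lop {p : ℕ} (x : EdgeIdx p → ℝ) : Matrix (Fin p) (Fin p) ℝ :=
  Matrix.of fun i j => if i = j then ∑ l, wmat x i l else - wmat x i j
/-- The adjoint operator `L* : ℝ^{p×p} → ℝ^{p(p-1)/2}`, `[L*Y]_k = Y_ii - Y_ij - Y_ji + Y_jj`. -/
def Lstar {p : ℕ} (Y : Matrix (Fin p) (Fin p) ℝ) (k : EdgeIdx p) : ℝ :=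
  Y k.1.1 k.1.1 - Y k.1.1 k.1.2 - Y k.1.2 k.1.1 + Y k.1.2 k.1.2
/-- The matrix `J = (1/p)·1·1ᵀ`. -/
def Jmat (p : ℕ) : Matrix (Fin p) (Fin p) ℝ := Matrix.of fun _ _ => (1 : ℝ) / p

/-! With `𝟙` the all-ones vector, `J = p⁻¹ 𝟙 𝟙ᵀ`, so `vᵀ (X + J) v = vᵀ X v + (𝟙ᵀ v)² / p`.
Because `X` is symmetric and `X 𝟙 = 0`, `vᵀ X v` does not change when a multiple of `𝟙` is
subtracted from `v`, and a suitable multiple makes `𝟙ᵀ v = 0`. Hence `X + J` is positive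
definite iff `X` is positive semidefinite with `ker X = ℝ 𝟙`, and since `𝟙 ∈ ker X`, rank–nullity
turns the kernel condition into `rank X = p - 1`. -/

open Submodule

namespace Matrix

variable {n : Type*} [Fintype n]

section CommRing

variable {R : Type*} [CommRing R] {X : Matrix n n R} {u : n → R}

theorem dotProduct_vecMulVec_self_mulVec (u v : n → R) :
    v ⬝ᵥ (vecMulVec u u *ᵥ v) = (u ⬝ᵥ v) ^ 2 := by
  rw [vecMulVec_mulVec, op_smul_eq_smul, dotProduct_smul, smul_eq_mul, dotProduct_comm, sq]

theorem dotProduct_add_smul_vecMulVec_mulVec (c : R) (v : n → R) :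
    v ⬝ᵥ ((X + c • vecMulVec u u) *ᵥ v) = v ⬝ᵥ (X *ᵥ v) + c * (u ⬝ᵥ v) ^ 2 := by
  rw [add_mulVec, smul_mulVec, dotProduct_add, dotProduct_smul, smul_eq_mul,
    dotProduct_vecMulVec_self_mulVec]

theorem mulVec_sub_smul_of_mulVec_eq_zero (hXu : X *ᵥ u = 0) (v : n → R) (a : R) :
    X *ᵥ (v - a • u) = X *ᵥ v := by
  rw [mulVec_sub, mulVec_smul, hXu, smul_zero, sub_zero]

theorem dotProduct_mulVec_sub_smul_of_mulVec_eq_zero (hX : X.IsSymm) (hXu : X *ᵥ u = 0)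
    (v : n → R) (a : R) : (v - a • u) ⬝ᵥ (X *ᵥ (v - a • u)) = v ⬝ᵥ (X *ᵥ v) := by
  rw [mulVec_sub_smul_of_mulVec_eq_zero hXu, sub_dotProduct, smul_dotProduct, dotProduct_mulVec u,
    ← mulVec_transpose, hX.eq, hXu, zero_dotProduct, smul_zero, sub_zero]

theorem span_singleton_le_ker_mulVecLin (hXu : X *ᵥ u = 0) :
    R ∙ u ≤ LinearMap.ker X.mulVecLin := by
  rw [span_singleton_le_iff_mem, LinearMap.mem_ker, mulVecLin_apply, hXu]

end CommRing

theorem rank_eq_card_sub_one_iff_ker_mulVecLin_eq_span {K : Type*} [Field K] {X : Matrix n n K}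
    {u : n → K} (hXu : X *ᵥ u = 0) (hu : u ≠ 0) :
    X.rank = Fintype.card n - 1 ↔ LinearMap.ker X.mulVecLin = K ∙ u := by
  have hrank := LinearMap.finrank_range_add_finrank_ker X.mulVecLin
  rw [Module.finrank_fintype_fun_eq_card] at hrank
  rw [rank, eq_comm (b := K ∙ u)]
  constructor
  · intro h
    exact eq_of_le_of_finrank_le (span_singleton_le_ker_mulVecLin hXu)
      (by rw [finrank_span_singleton hu]; omega)
  · intro h
    rw [← h, finrank_span_singleton hu] at hrank
    omega

section Real

variable {X : Matrix n n ℝ} {u : n → ℝ}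

theorem exists_dotProduct_sub_smul_eq_zero (u v : n → ℝ) : ∃ a : ℝ, u ⬝ᵥ (v - a • u) = 0 := by
  by_cases hu : u = 0
  · exact ⟨0, by simp [hu]⟩
  have huu : u ⬝ᵥ u ≠ 0 := by rwa [Ne, dotProduct_self_eq_zero]
  refine ⟨(u ⬝ᵥ v) / (u ⬝ᵥ u), ?_⟩
  rw [dotProduct_sub, dotProduct_smul, smul_eq_mul, div_mul_cancel₀ _ huu, sub_self]

theorem posSemidef_of_posDef_add_smul_vecMulVec (hX : X.IsSymm) (hXu : X *ᵥ u = 0) {c : ℝ}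
    (h : (X + c • vecMulVec u u).PosDef) : X.PosSemidef := by
  refine posSemidef_iff_dotProduct_mulVec.2 ⟨hX, fun v => ?_⟩
  obtain ⟨a, hperp⟩ := exists_dotProduct_sub_smul_eq_zero u v
  rw [star_trivial, ← dotProduct_mulVec_sub_smul_of_mulVec_eq_zero hX hXu v a]
  by_cases hw : v - a • u = 0
  · simp [hw]
  · have := h.dotProduct_mulVec_pos hw
    rw [star_trivial, dotProduct_add_smul_vecMulVec_mulVec, hperp, sq, mul_zero, mul_zero,
      add_zero] at this
    exact this.le

theorem ker_mulVecLin_le_span_of_posDef_add_smul_vecMulVec (hXu : X *ᵥ u = 0)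
    {c : ℝ} (h : (X + c • vecMulVec u u).PosDef) : LinearMap.ker X.mulVecLin ≤ ℝ ∙ u := by
  intro v hv
  rw [LinearMap.mem_ker, mulVecLin_apply] at hv
  obtain ⟨a, hperp⟩ := exists_dotProduct_sub_smul_eq_zero u v
  have hw : v - a • u = 0 := by
    by_contra hw
    have := h.dotProduct_mulVec_pos hw
    rw [star_trivial, dotProduct_add_smul_vecMulVec_mulVec, hperp,
      mulVec_sub_smul_of_mulVec_eq_zero hXu, hv] at this
    simp at this
  rw [sub_eq_zero.1 hw]
  exact smul_mem _ a (mem_span_singleton_self u)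

theorem posDef_add_smul_vecMulVec (hX : X.PosSemidef) (hker : LinearMap.ker X.mulVecLin ≤ ℝ ∙ u)
    {c : ℝ} (hc : 0 < c) : (X + c • vecMulVec u u).PosDef := by
  have hsymm : (X + c • vecMulVec u u).IsHermitian :=
    hX.isHermitian.add ((posSemidef_vecMulVec_self_star u).isHermitian.smul (IsSelfAdjoint.all c))
  refine posDef_iff_dotProduct_mulVec.2 ⟨hsymm, fun v hv => ?_⟩
  rw [star_trivial, dotProduct_add_smul_vecMulVec_mulVec]
  have hXv : 0 ≤ v ⬝ᵥ (X *ᵥ v) := by simpa using hX.dotProduct_mulVec_nonneg v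
  by_contra! hle
  have hcuv : c * (u ⬝ᵥ v) ^ 2 = 0 := le_antisymm (by linarith) (by positivity)
  have huv : u ⬝ᵥ v = 0 := by simpa [hc.ne'] using hcuv
  have hXv0 : X *ᵥ v = 0 := by
    rw [← hX.dotProduct_mulVec_zero_iff, star_trivial]
    linarith
  obtain ⟨a, rfl⟩ := mem_span_singleton.1 (hker (by simpa using hXv0))
  -- `v ⬝ v = a (u ⬝ v) = 0`
  exact hv (dotProduct_self_eq_zero.1 (by rw [smul_dotProduct, huv, smul_zero]))

theorem posDef_add_smul_vecMulVec_iff (hX : X.IsSymm) (hXu : X *ᵥ u = 0) {c : ℝ} (hc : 0 < c) :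
    (X + c • vecMulVec u u).PosDef ↔ X.PosSemidef ∧ LinearMap.ker X.mulVecLin = ℝ ∙ u := by
  refine ⟨fun h => ⟨posSemidef_of_posDef_add_smul_vecMulVec hX hXu h,
    le_antisymm (ker_mulVecLin_le_span_of_posDef_add_smul_vecMulVec hXu h)
      (span_singleton_le_ker_mulVecLin hXu)⟩,
    fun ⟨hpsd, hker⟩ => posDef_add_smul_vecMulVec hpsd hker.le hc⟩

end Real

end Matrix

theorem Jmat_eq_smul_vecMulVec (p : ℕ) :
    Jmat p = (1 / p : ℝ) • vecMulVec (fun _ => 1) (fun _ => 1) := by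
  ext i j
  simp [Jmat, vecMulVec]

theorem connected_laplacian_iff_posDef_general (p : ℕ) (hp : 0 < p)
    (X : Matrix (Fin p) (Fin p) ℝ) (hsym : X.IsSymm)
    (h1 : X *ᵥ (fun _ => (1 : ℝ)) = 0) :
    (X.PosSemidef ∧ X.rank = p - 1) ↔ (X + Jmat p).PosDef := by
  have hone : (fun _ => (1 : ℝ) : Fin p → ℝ) ≠ 0 := fun h => one_ne_zero (congrFun h ⟨0, hp⟩)
  rw [Jmat_eq_smul_vecMulVec, posDef_add_smul_vecMulVec_iff hsym h1 (by positivity),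
    ← rank_eq_card_sub_one_iff_ker_mulVecLin_eq_span h1 hone, Fintype.card_fin]

/-- A symmetric `X` with nonpositive off-diagonal entries and `X·1 = 0` is the Laplacian
of a connected graph (positive semidefinite with rank `p-1`) iff `X + J` is positive
definite, where `J = (1/p)·1·1ᵀ`. -/
theorem connected_laplacian_iff_posDef (p : ℕ) (hp : 0 < p)
    (X : Matrix (Fin p) (Fin p) ℝ) (hsym : X.IsSymm)
    (hoff : ∀ i j, i ≠ j → X i j ≤ 0)
    (h1 : X *ᵥ (fun _ => (1 : ℝ)) = 0) :
    (X.PosSemidef ∧ X.rank = p - 1) ↔ (X + Jmat p).PosDef :=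
  connected_laplacian_iff_posDef_general p hp X hsym h1
end
end

section
/- For any y ∈ ℝ^{p(p-1)/2} and sparsity level s, a Euclidean projection of y onto the intersection Ω_s ∩ ℝ₊^{p(p-1)/2} is obtained by first projecting onto the nonnegative orthant (replacing negative entries with 0) and then keeping the s largest entries and setting the rest to zero. -/
open BigOperators Finset

/-!
A nonnegative `x` supported on `S` costs at least `‖y‖² - ∑_{i ∈ S} (y_i⁺)²`: coordinatewise,
`(x_i - y_i)² ≥ y_i² - (y_i⁺)²` when `x_i ≥ 0`, with equality at `x_i = y_i⁺`. The truncation to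
`T` attains this bound for `S = T`, and among index sets of size at most `s` the bound is smallest
for the set `T` carrying the `s` largest values of `y⁺`.
-/

theorem Finset.sum_le_sum_of_card_le_of_forall_le_of_notMem {ι M : Type*} [AddCommMonoid M]
    [LinearOrder M] [IsOrderedCancelAddMonoid M] {s t : Finset ι} {f : ι → M}
    (hf : ∀ i ∈ t, 0 ≤ f i) (hcard : #s ≤ #t) (htop : ∀ i ∈ t, ∀ j ∉ t, f j ≤ f i) :
    ∑ i ∈ s, f i ≤ ∑ i ∈ t, f i := by
  classical
  rw [← sum_sdiff_le_sum_sdiff]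
  have hsdiff : #(s \ t) ≤ #(t \ s) := card_sdiff_le_card_sdiff_iff.mpr hcard
  obtain hempty | hne := (t \ s).eq_empty_or_nonempty
  · rw [hempty, card_empty, Nat.le_zero, card_eq_zero] at hsdiff
    simp [hempty, hsdiff]
  obtain ⟨b, hb, hbmin⟩ := exists_min_image _ f hne
  have hbt : b ∈ t := (mem_sdiff.mp hb).1
  calc ∑ i ∈ s \ t, f i
      ≤ #(s \ t) • f b := sum_le_card_nsmul _ _ _ fun i hi => htop b hbt i (mem_sdiff.mp hi).2
    _ ≤ #(t \ s) • f b := nsmul_le_nsmul_left (hf b hbt) hsdiff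
    _ ≤ ∑ i ∈ t \ s, f i := card_nsmul_le_sum _ _ _ hbmin

theorem sq_sub_sq_max_zero_le_sq_sub {x : ℝ} (y : ℝ) (hx : 0 ≤ x) :
    y ^ 2 - max y 0 ^ 2 ≤ (x - y) ^ 2 := by
  rcases le_total y 0 with h | h
  · rw [max_eq_right h]; nlinarith
  · rw [max_eq_left h]; nlinarith

theorem sq_max_zero_sub (y : ℝ) : (max y 0 - y) ^ 2 = y ^ 2 - max y 0 ^ 2 := by
  rcases le_total y 0 with h | h
  · rw [max_eq_right h]; ring
  · rw [max_eq_left h]; ring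

section

variable {ι : Type*} [Fintype ι] [DecidableEq ι]

theorem sum_sq_sub_sum_sq_max_zero_eq (y : ι → ℝ) (s : Finset ι) :
    ∑ i, y i ^ 2 - ∑ i ∈ s, max (y i) 0 ^ 2
      = ∑ i, (y i ^ 2 - if i ∈ s then max (y i) 0 ^ 2 else 0) := by
  rw [sum_sub_distrib, sum_ite_mem, univ_inter]

theorem sum_sq_sub_sum_sq_max_zero_le {x y : ι → ℝ} {s : Finset ι} (hx : ∀ i, 0 ≤ x i)
    (hsupp : ∀ i ∉ s, x i = 0) :
    ∑ i, y i ^ 2 - ∑ i ∈ s, max (y i) 0 ^ 2 ≤ ∑ i, (x i - y i) ^ 2 := by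
  rw [sum_sq_sub_sum_sq_max_zero_eq]
  refine sum_le_sum fun i _ => ?_
  split_ifs with hi
  · exact sq_sub_sq_max_zero_le_sq_sub (y i) (hx i)
  · rw [hsupp i hi, zero_sub, neg_sq, sub_zero]

theorem sum_sq_ite_max_zero_sub (y : ι → ℝ) (s : Finset ι) :
    ∑ i, ((if i ∈ s then max (y i) 0 else 0) - y i) ^ 2
      = ∑ i, y i ^ 2 - ∑ i ∈ s, max (y i) 0 ^ 2 := by
  rw [sum_sq_sub_sum_sq_max_zero_eq]
  refine sum_congr rfl fun i _ => ?_
  split_ifs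
  · exact sq_max_zero_sub (y i)
  · rw [zero_sub, neg_sq, sub_zero]

end

/-- Projecting onto the nonnegative orthant and then keeping the `s` largest entries
(zeroing the rest) yields a Euclidean projection of `y` onto `Ω_s ∩ ℝ₊^d`. -/
theorem two_step_projection (d s : ℕ) (y : Fin d → ℝ)
    (T : Finset (Fin d)) (hTcard : T.card = min s d)
    (hTtop : ∀ i ∈ T, ∀ j ∉ T, max (y j) 0 ≤ max (y i) 0) :
    ((Finset.univ.filter fun i =>
        (if i ∈ T then max (y i) 0 else 0) ≠ 0).card ≤ s ∧
      (∀ i, 0 ≤ if i ∈ T then max (y i) 0 else 0)) ∧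
    ∀ x : Fin d → ℝ, (Finset.univ.filter fun i => x i ≠ 0).card ≤ s → (∀ i, 0 ≤ x i) →
      ∑ i, ((if i ∈ T then max (y i) 0 else 0) - y i) ^ 2 ≤ ∑ i, (x i - y i) ^ 2 := by
  refine ⟨⟨?_, fun i => ?_⟩, fun x hxs hx => ?_⟩
  · have hsupp : (univ.filter fun i => (if i ∈ T then max (y i) 0 else 0) ≠ 0) ⊆ T :=
      fun i hi => by_contra fun hiT => (mem_filter.mp hi).2 (if_neg hiT)
    exact (card_le_card hsupp).trans (hTcard.trans_le (min_le_left s d))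
  · split_ifs
    exacts [le_max_right _ _, le_rfl]
  set S := univ.filter fun i => x i ≠ 0
  have hST : #S ≤ #T := hTcard ▸ le_min hxs (card_le_univ S |>.trans_eq (Fintype.card_fin d))
  have hsum : ∑ i ∈ S, max (y i) 0 ^ 2 ≤ ∑ i ∈ T, max (y i) 0 ^ 2 :=
    sum_le_sum_of_card_le_of_forall_le_of_notMem (fun i _ => sq_nonneg _) hST
      fun i hi j hj => pow_le_pow_left₀ (le_max_right _ _) (hTtop i hi j hj) 2
  calc ∑ i, ((if i ∈ T then max (y i) 0 else 0) - y i) ^ 2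
      = ∑ i, y i ^ 2 - ∑ i ∈ T, max (y i) 0 ^ 2 := sum_sq_ite_max_zero_sub y T
    _ ≤ ∑ i, y i ^ 2 - ∑ i ∈ S, max (y i) 0 ^ 2 := sub_le_sub_left hsum _
    _ ≤ ∑ i, (x i - y i) ^ 2 :=
      sum_sq_sub_sum_sq_max_zero_le hx fun i hi => by simpa [S] using hi
end

section
/- Under the Armijo-type backtracking rule, if f is continuously differentiable on the open set V_{++}, then at any non-stationary point x_k the line search terminates in finitely many steps: there exists m ∈ ℕ such that with η = σβ^m, the projected point x_k(η) lies in V_{++} and f(x_k(η)) ≤ f(x_k) - αη‖G_{1/η}(x_k)‖². -/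
open Matrix BigOperators Finset
noncomputable section
/-- Objective `f(x) = -log det(Lx + J) + tr(S·Lx)`. -/
def fobj {p : ℕ} (S : Matrix (Fin p) (Fin p) ℝ) (x : EuclideanSpace ℝ (EdgeIdx p)) : ℝ :=
  -Real.log (Lop x + Jmat p).det + (S * Lop x).trace

/-- The constraint set `Ω_s ∩ ℝ₊^d`. -/
def constr (p s : ℕ) : Set (EuclideanSpace ℝ (EdgeIdx p)) :=
  {x | (Finset.univ.filter fun k => x k ≠ 0).card ≤ s ∧ ∀ k, 0 ≤ x k}

/-! For small steps `η`, the projected point `z = P (x - η ∇f x)` lies within `2 η ‖∇f x‖` of `x`,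
hence in the open set `V₊₊` and in a ball on which `f` is `C¹` with `L`-Lipschitz derivative.
Near `x` the support of `z` contains that of `x`, so `x` and `z` both lie in the convex face
`{v ≥ 0 | supp v ⊆ supp z}` of `Ω_s ∩ ℝ₊^d`, and `z` is also the projection onto that face. The
variational inequality of this convex projection gives `‖x - z‖² ≤ η ⟪∇f x, x - z⟫`, and the
descent lemma `f z ≤ f x - ⟪∇f x, x - z⟫ + L ‖x - z‖²` then yields the Armijo inequality as soon
as `η L ≤ 1 - α`. Since `σ βᵐ → 0⁺`, some `m` works. -/

open Filter Topology
open scoped InnerProductSpace NNReal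

theorem Matrix.PosDef.eventually_posDef {n : Type*} [Fintype n] {A : Matrix n n ℝ}
    (hA : A.PosDef) : ∀ᶠ B in 𝓝 A, B.IsHermitian → B.PosDef := by
  have hq : Continuous fun q : Matrix n n ℝ × (n → ℝ) => q.2 ⬝ᵥ q.1 *ᵥ q.2 :=
    continuous_snd.dotProduct (continuous_fst.matrix_mulVec continuous_snd)
  have hsphere : ∀ᶠ B in 𝓝 A, ∀ v ∈ Metric.sphere (0 : n → ℝ) 1, 0 < v ⬝ᵥ B *ᵥ v := by
    refine (isCompact_sphere 0 1).eventually_forall_of_forall_eventually fun v hv => ?_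
    have hv0 : v ≠ 0 := ne_zero_of_mem_unit_sphere ⟨v, hv⟩
    exact hq.continuousAt.eventually
      (lt_mem_nhds (by simpa using hA.dotProduct_mulVec_pos hv0))
  filter_upwards [hsphere] with B hB hBh
  refine .of_dotProduct_mulVec_pos hBh fun v hv => ?_
  have hnorm : 0 < ‖v‖ := norm_pos_iff.2 hv
  have hunit := hB (‖v‖⁻¹ • v) (by simp [norm_smul, hnorm.ne'])
  rw [smul_dotProduct, mulVec_smul, dotProduct_smul, smul_eq_mul, smul_eq_mul] at hunit
  rw [star_trivial]
  exact pos_of_mul_pos_right (pos_of_mul_pos_right hunit (by positivity)) (by positivity)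

section Smoothness

variable {𝕜 : Type*} [NontriviallyNormedField 𝕜] {E : Type*} [NormedAddCommGroup E]
  [NormedSpace 𝕜 E] {n : Type*} [Fintype n] {k : WithTop ℕ∞}

theorem ContDiff.matrix_det [DecidableEq n] {A : E → Matrix n n 𝕜}
    (hA : ∀ i j, ContDiff 𝕜 k fun y => A y i j) : ContDiff 𝕜 k fun y => (A y).det := by
  simp only [Matrix.det_apply']
  exact ContDiff.sum fun σ _ => contDiff_const.mul (contDiff_prod fun i _ => hA _ _)

theorem ContDiff.matrix_trace_mul (S : Matrix n n 𝕜) {A : E → Matrix n n 𝕜}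
    (hA : ∀ i j, ContDiff 𝕜 k fun y => A y i j) :
    ContDiff 𝕜 k fun y => (S * A y).trace := by
  simp only [Matrix.trace, Matrix.diag, Matrix.mul_apply]
  exact ContDiff.sum fun i _ => ContDiff.sum fun j _ => contDiff_const.mul (hA j i)

end Smoothness

section Laplacian

variable {p : ℕ}

theorem contDiff_wmat_apply (i j : Fin p) {k : WithTop ℕ∞} :
    ContDiff ℝ k fun y : EuclideanSpace ℝ (EdgeIdx p) => wmat y i j := by
  unfold wmat
  split_ifs with hji hij
  · exact (EuclideanSpace.proj (𝕜 := ℝ) (⟨(i, j), hji⟩ : EdgeIdx p)).contDiff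
  · exact (EuclideanSpace.proj (𝕜 := ℝ) (⟨(j, i), hij⟩ : EdgeIdx p)).contDiff
  · exact contDiff_const

theorem contDiff_Lop_apply (i j : Fin p) {k : WithTop ℕ∞} :
    ContDiff ℝ k fun y : EuclideanSpace ℝ (EdgeIdx p) => Lop y i j := by
  simp only [Lop, Matrix.of_apply]
  split_ifs
  · exact ContDiff.sum fun l _ => contDiff_wmat_apply i l
  · exact (contDiff_wmat_apply i j).neg

theorem contDiffAt_fobj (S : Matrix (Fin p) (Fin p) ℝ) {k : WithTop ℕ∞}
    {x : EuclideanSpace ℝ (EdgeIdx p)} (hx : (Lop x + Jmat p).PosDef) :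
    ContDiffAt ℝ k (fobj S) x := by
  have hdet : ContDiff ℝ k fun y : EuclideanSpace ℝ (EdgeIdx p) => (Lop y + Jmat p).det :=
    ContDiff.matrix_det fun i j => (contDiff_Lop_apply i j).add contDiff_const
  exact ((Real.contDiffAt_log.2 hx.det_pos.ne').comp x hdet.contDiffAt).neg.add
    (ContDiff.matrix_trace_mul S fun i j => contDiff_Lop_apply i j).contDiffAt

theorem wmat_comm (u : EdgeIdx p → ℝ) (i j : Fin p) : wmat u i j = wmat u j i := by
  unfold wmat
  rcases lt_trichotomy j i with h | rfl | h
  · rw [dif_pos h, dif_neg (asymm h), dif_pos h]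
  · rfl
  · rw [dif_neg (asymm h), dif_pos h, dif_pos h]

theorem isHermitian_Lop_add_Jmat (u : EdgeIdx p → ℝ) : (Lop u + Jmat p).IsHermitian := by
  refine Matrix.IsHermitian.add ?_ (Matrix.IsHermitian.ext fun _ _ => rfl)
  refine Matrix.IsHermitian.ext fun i j => ?_
  simp only [Lop, Matrix.of_apply, star_trivial, eq_comm (a := j), wmat_comm u j i]
  rcases eq_or_ne i j with rfl | h <;> simp [*]

theorem isOpen_setOf_posDef_Lop_add_Jmat :
    IsOpen {y : EuclideanSpace ℝ (EdgeIdx p) | (Lop y + Jmat p).PosDef} := by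
  have hcont : Continuous fun y : EuclideanSpace ℝ (EdgeIdx p) => Lop y + Jmat p :=
    continuous_pi fun i => continuous_pi fun j =>
      ((contDiff_Lop_apply (k := 0) i j).continuous).add continuous_const
  refine isOpen_iff_mem_nhds.2 fun x hx => ?_
  filter_upwards [hcont.continuousAt.eventually hx.eventually_posDef] with y hy
  exact hy (isHermitian_Lop_add_Jmat y)

end Laplacian

def IsMetricProjection {X : Type*} [PseudoMetricSpace X] (C : Set X) (P : X → X) : Prop :=
  ∀ y, P y ∈ C ∧ ∀ z ∈ C, dist (P y) y ≤ dist z y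

namespace IsMetricProjection

section PseudoMetric

variable {X : Type*} [PseudoMetricSpace X] {C : Set X} {P : X → X}

theorem dist_le_two_mul (hP : IsMetricProjection C P) {x : X} (hx : x ∈ C) (y : X) :
    dist (P y) x ≤ 2 * dist y x := by
  have := (hP y).2 x hx
  linarith [dist_triangle (P y) y x, dist_comm x y]

theorem tendsto_nhds (hP : IsMetricProjection C P) {x : X} (hx : x ∈ C) :
    Tendsto P (𝓝 x) (𝓝 x) := by
  refine tendsto_iff_dist_tendsto_zero.2 (squeeze_zero (fun _ => dist_nonneg)
    (hP.dist_le_two_mul hx) ?_)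
  simpa using ((continuous_id.dist (continuous_const (y := x))).tendsto x).const_mul 2

end PseudoMetric

variable {F : Type*} [NormedAddCommGroup F] [InnerProductSpace ℝ F] {C : Set F} {P : F → F}

theorem tendsto_sub_smul (hP : IsMetricProjection C P) {x : F} (hx : x ∈ C) (g : F) :
    Tendsto (fun η : ℝ => P (x - η • g)) (𝓝 0) (𝓝 x) := by
  refine (hP.tendsto_nhds hx).comp ?_
  have hstep : Continuous fun η : ℝ => x - η • g := by fun_prop
  simpa using hstep.tendsto 0

theorem inner_sub_nonpos (hP : IsMetricProjection C P) {K : Set F} (hK : Convex ℝ K)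
    (hKC : K ⊆ C) {x y : F} (hx : x ∈ K) (hy : P y ∈ K) : ⟪y - P y, x - P y⟫_ℝ ≤ 0 := by
  refine (norm_eq_iInf_iff_real_inner_le_zero hK hy).1 (le_antisymm ?_ ?_) x hx
  · have : Nonempty K := ⟨⟨x, hx⟩⟩
    refine le_ciInf fun w => ?_
    simpa only [dist_eq_norm, norm_sub_rev] using (hP y).2 w (hKC w.2)
  · exact ciInf_le ⟨0, by rintro _ ⟨w, rfl⟩; exact norm_nonneg (y - w)⟩ (⟨P y, hy⟩ : K)

end IsMetricProjection

section OrthantFace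

variable {ι : Type*}

def orthantFace (z : EuclideanSpace ℝ ι) : Set (EuclideanSpace ℝ ι) :=
  {v | ∀ k, 0 ≤ v k ∧ (z k = 0 → v k = 0)}

theorem convex_orthantFace (z : EuclideanSpace ℝ ι) : Convex ℝ (orthantFace z) := by
  intro v hv w hw a b ha hb _ k
  simp only [PiLp.add_apply, PiLp.smul_apply, smul_eq_mul]
  refine ⟨by nlinarith [hv k, hw k], fun hk => ?_⟩
  rw [(hv k).2 hk, (hw k).2 hk, mul_zero, mul_zero, add_zero]

theorem eventually_mem_orthantFace [Fintype ι] {x : EuclideanSpace ℝ ι} (hx : ∀ k, 0 ≤ x k) :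
    ∀ᶠ z in 𝓝 x, x ∈ orthantFace z := by
  refine eventually_all.2 fun k => ?_
  rcases eq_or_ne (x k) 0 with hxk | hxk
  · exact .of_forall fun _ => ⟨hx k, fun _ => hxk⟩
  · filter_upwards [(EuclideanSpace.proj (𝕜 := ℝ) k).continuous.continuousAt.eventually_ne hxk]
      with z hz
    exact ⟨hx k, fun hzk => absurd hzk hz⟩

end OrthantFace

theorem orthantFace_subset_constr {p s : ℕ} {z : EuclideanSpace ℝ (EdgeIdx p)}
    (hz : z ∈ constr p s) : orthantFace z ⊆ constr p s := by
  refine fun v hv => ⟨le_trans (Finset.card_le_card fun k => ?_) hz.1, fun k => (hv k).1⟩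
  simp only [Finset.mem_filter, Finset.mem_univ, true_and]
  exact mt (hv k).2

theorem eventually_exists_convex_subset_constr {p s : ℕ} {x : EuclideanSpace ℝ (EdgeIdx p)}
    (hx : x ∈ constr p s) :
    ∀ᶠ z in 𝓝 x, z ∈ constr p s → ∃ K ⊆ constr p s, Convex ℝ K ∧ x ∈ K ∧ z ∈ K := by
  filter_upwards [eventually_mem_orthantFace hx.2] with z hxz hz
  exact ⟨orthantFace z, orthantFace_subset_constr hz, convex_orthantFace z, hxz,
    fun k => ⟨hz.2 k, id⟩⟩

theorem image_le_add_fderiv_add_mul_norm_sq {E : Type*} [NormedAddCommGroup E]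
    [NormedSpace ℝ E] {f : E → ℝ} {s : Set E} {K : ℝ≥0} (hs : Convex ℝ s)
    (hf : ∀ w ∈ s, DifferentiableAt ℝ f w) (hK : LipschitzOnWith K (fderiv ℝ f) s)
    {x z : E} (hx : x ∈ s) (hz : z ∈ s) :
    f z ≤ f x + fderiv ℝ f x (z - x) + K * ‖z - x‖ ^ 2 := by
  have hseg : segment ℝ x z ⊆ s := hs.segment_subset hx hz
  have hbound : ∀ w ∈ segment ℝ x z, ‖fderiv ℝ f w - fderiv ℝ f x‖ ≤ K * ‖z - x‖ := by
    intro w hw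
    calc ‖fderiv ℝ f w - fderiv ℝ f x‖ ≤ K * ‖w - x‖ := by
          simpa only [dist_eq_norm] using hK.dist_le_mul w (hseg hw) x hx
      _ ≤ K * ‖z - x‖ := by
          gcongr
          rw [← dist_eq_norm, ← dist_eq_norm, dist_comm w, dist_comm z]
          linarith [dist_add_dist_of_mem_segment hw, dist_nonneg (x := w) (y := z)]
  have hmvt := (convex_segment x z).norm_image_sub_le_of_norm_hasFDerivWithin_le'
    (fun w hw => (hf w (hseg hw)).hasFDerivAt.hasFDerivWithinAt) hbound
    (left_mem_segment ℝ x z) (right_mem_segment ℝ x z)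
  linarith [(abs_le.1 ((Real.norm_eq_abs _).symm.trans_le hmvt)).2]

theorem IsMetricProjection.eventually_armijo {F : Type*} [NormedAddCommGroup F]
    [InnerProductSpace ℝ F] [CompleteSpace F] {C : Set F} {P : F → F}
    (hP : IsMetricProjection C P) {x : F} (hxC : x ∈ C)
    (hC : ∀ᶠ z in 𝓝 x, z ∈ C → ∃ K ⊆ C, Convex ℝ K ∧ x ∈ K ∧ z ∈ K)
    {f : F → ℝ} (hf : ContDiffAt ℝ 2 f x) {α : ℝ} (hα : α < 1) :
    ∀ᶠ η in 𝓝[>] 0, f (P (x - η • gradient f x)) ≤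
      f x - α * η * ‖(1 / η) • (x - P (x - η • gradient f x))‖ ^ 2 := by
  set g := gradient f x
  obtain ⟨L, t, ht, hL⟩ := (hf.fderiv_right (m := 1) (by norm_num)).exists_lipschitzOnWith
  have hdiff : ∀ᶠ w in 𝓝 x, DifferentiableAt ℝ f w :=
    (hf.eventually (by simp)).mono fun w hw => hw.differentiableAt (by norm_num)
  obtain ⟨R, hR, hball⟩ := Metric.mem_nhds_iff.1 (inter_mem ht hdiff)
  have hproj : Tendsto (fun η : ℝ => P (x - η • g)) (𝓝[>] 0) (𝓝 x) :=
    (hP.tendsto_sub_smul hxC g).mono_left nhdsWithin_le_nhds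
  have hsmall : ∀ᶠ η in 𝓝[>] (0 : ℝ), η * L ≤ 1 - α := by
    have : Tendsto (fun η : ℝ => η * L) (𝓝 0) (𝓝 0) := by
      simpa using (tendsto_id (x := 𝓝 (0 : ℝ))).mul_const (L : ℝ)
    exact (this.eventually (ge_mem_nhds (by linarith))).filter_mono nhdsWithin_le_nhds
  filter_upwards [hproj.eventually (Metric.ball_mem_nhds x hR), hproj.eventually hC, hsmall,
    self_mem_nhdsWithin] with η hzR hzC hηL (hη : 0 < η)
  set z := P (x - η • g)
  obtain ⟨K, hKC, hK, hxK, hzK⟩ := hzC (hP _).1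
  have hvar : ⟪x - η • g - z, x - z⟫_ℝ ≤ 0 := hP.inner_sub_nonpos hK hKC hxK hzK
  have hdescent := image_le_add_fderiv_add_mul_norm_sq (convex_ball x R)
    (fun w hw => (hball hw).2) (hL.mono fun w hw => (hball hw).1)
    (Metric.mem_ball_self hR) hzR
  set d := x - z with hd_def
  have hd : ‖d‖ ^ 2 ≤ η * ⟪g, d⟫_ℝ := by
    rw [show x - η • g - z = d - η • g by rw [hd_def]; abel, inner_sub_left,
      real_inner_smul_left, real_inner_self_eq_norm_sq] at hvar
    linarith [real_inner_comm g d]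
  rw [← inner_gradient_left, show z - x = -d by rw [hd_def]; abel, inner_neg_right,
    norm_neg] at hdescent
  have hnorm : α * η * ‖(1 / η) • d‖ ^ 2 = α * ‖d‖ ^ 2 / η := by
    rw [norm_smul, mul_pow, Real.norm_eq_abs, sq_abs]
    field_simp
  rw [hnorm, le_sub_comm, div_le_iff₀ hη]
  nlinarith [mul_le_mul_of_nonneg_right hηL (sq_nonneg ‖d‖)]

theorem armijo_line_search_terminates_general (p s : ℕ) (S : Matrix (Fin p) (Fin p) ℝ)
    (P : EuclideanSpace ℝ (EdgeIdx p) → EuclideanSpace ℝ (EdgeIdx p))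
    (hP : ∀ y, P y ∈ constr p s ∧ ∀ z ∈ constr p s, dist (P y) y ≤ dist z y)
    (x : EuclideanSpace ℝ (EdgeIdx p)) (hxC : x ∈ constr p s)
    (hxV : (Lop x + Jmat p).PosDef)
    (σ α β : ℝ) (hσ : 0 < σ) (hα : α ∈ Set.Ioo (0 : ℝ) 1) (hβ : β ∈ Set.Ioo (0 : ℝ) 1) :
    ∃ m : ℕ,
      (Lop (P (x - (σ * β ^ m) • gradient (fobj S) x)) + Jmat p).PosDef ∧
      fobj S (P (x - (σ * β ^ m) • gradient (fobj S) x)) ≤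
        fobj S x - α * (σ * β ^ m) *
          ‖(1 / (σ * β ^ m)) • (x - P (x - (σ * β ^ m) • gradient (fobj S) x))‖ ^ 2 := by
  have hproj : IsMetricProjection (constr p s) P := hP
  have hV : ∀ᶠ η : ℝ in 𝓝[>] 0, (Lop (P (x - η • gradient (fobj S) x)) + Jmat p).PosDef :=
    ((hproj.tendsto_sub_smul hxC _).mono_left nhdsWithin_le_nhds).eventually
      (isOpen_setOf_posDef_Lop_add_Jmat.mem_nhds hxV)
  have hArmijo := hproj.eventually_armijo hxC (eventually_exists_convex_subset_constr hxC)
    (contDiffAt_fobj S hxV) hα.2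
  have hstep : Tendsto (fun m : ℕ => σ * β ^ m) atTop (𝓝[>] 0) := by
    refine tendsto_nhdsWithin_iff.2 ⟨?_, .of_forall fun m => mul_pos hσ (pow_pos hβ.1 m)⟩
    simpa using (tendsto_pow_atTop_nhds_zero_of_lt_one hβ.1.le hβ.2).const_mul σ
  exact (hstep.eventually (hV.and hArmijo)).exists

/-- The Armijo-type backtracking line search terminates in finitely many steps at any
non-stationary feasible point: for some `m`, with `η = σβ^m`, the projected point lies
in `V₊₊` and `f(x(η)) ≤ f(x) - αη‖G_{1/η}(x)‖²`. -/
theorem armijo_line_search_terminates (p s : ℕ) (S : Matrix (Fin p) (Fin p) ℝ)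
    (P : EuclideanSpace ℝ (EdgeIdx p) → EuclideanSpace ℝ (EdgeIdx p))
    (hP : ∀ y, P y ∈ constr p s ∧ ∀ z ∈ constr p s, dist (P y) y ≤ dist z y)
    (x : EuclideanSpace ℝ (EdgeIdx p)) (hxC : x ∈ constr p s)
    (hxV : (Lop x + Jmat p).PosDef)
    (σ α β : ℝ) (hσ : 0 < σ) (hα : α ∈ Set.Ioo (0 : ℝ) 1) (hβ : β ∈ Set.Ioo (0 : ℝ) 1)
    (hns : ∃ η > 0, P (x - η • gradient (fobj S) x) ≠ x) :
    ∃ m : ℕ,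
      (Lop (P (x - (σ * β ^ m) • gradient (fobj S) x)) + Jmat p).PosDef ∧
      fobj S (P (x - (σ * β ^ m) • gradient (fobj S) x)) ≤
        fobj S x - α * (σ * β ^ m) *
          ‖(1 / (σ * β ^ m)) • (x - P (x - (σ * β ^ m) • gradient (fobj S) x))‖ ^ 2 :=
  armijo_line_search_terminates_general p s S P hP x hxC hxV σ α β hσ hα hβ
end
end
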